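/- Let g be a non-degenerate quadratic form on a Z/2-vector space V with dim V ∉ {0}, and suppose it is not the case that (dim V = 2 and Arf(g) = 0) nor (dim V = 4 and Arf(g) = 0). Let w₁,…,w_k ∈ V (k ≥ 0) be independent with g(w_i) = 1 and B(w_i,w_j) = 0 for all i,j, let W be their span, and let a₁, a₂ ∈ W^⊥ \ W satisfy g(a₁) = g(a₂) = 1 and B(a₁,a₂) = 0. Then there exists c ∈ W^⊥ with g(c) = 1 and B(a₁,c) = B(a₂,c) = 1. -/

import Mathlib

/-- The Arf invariant of `g` is `0`: the value `0` is taken by a majority of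
vectors (for a nondegenerate quadratic form over `ZMod 2` this is equivalent to
`g` being equivalent to the standard split form). -/
def ArfZero {V : Type*} [AddCommGroup V] [Module (ZMod 2) V] (g : V → ZMod 2) : Prop :=
  Nat.card {v : V // g v = 1} < Nat.card {v : V // g v = 0}

open Module


lemma zmod2_ne_one {x : ZMod 2} (h : x ≠ 1) : x = 0 := by revert h; revert x; decide
lemma zmod2_cases (x : ZMod 2) : x = 0 ∨ x = 1 := by revert x; decide
lemma zmod2_add_eq_zero {x y : ZMod 2} (h : x + y = 0) : x = y := by
  revert h; revert x y; decide
lemma zmod2_add_self (x : ZMod 2) : x + x = 0 := by revert x; decide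

lemma exists_dual_pair {M : Type*} [AddCommGroup M] [Module (ZMod 2) M]
    {x y : M} (hx : x ≠ 0) (hy : y ≠ 0) :
    ∃ φ : Module.Dual (ZMod 2) M, φ x = 1 ∧ φ y = 1 := by
  have hex : ∀ z : M, z ≠ 0 → ∃ φ : Module.Dual (ZMod 2) M, φ z = 1 := by
    intro z hz
    have := (Module.forall_dual_apply_eq_zero_iff (ZMod 2) z).not.mpr hz
    push_neg at this
    obtain ⟨φ, hφ⟩ := this
    rcases zmod2_cases (φ z) with h | h
    · exact absurd h hφ
    · exact ⟨φ, h⟩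
  obtain ⟨φ, hφx⟩ := hex x hx
  obtain ⟨ψ, hψy⟩ := hex y hy
  rcases zmod2_cases (φ y) with h1 | h1
  · rcases zmod2_cases (ψ x) with h2 | h2
    · exact ⟨φ + ψ, by simp [hφx, h2], by simp [hψy, h1]⟩
    · exact ⟨ψ, h2, hψy⟩
  · exact ⟨φ, hφx, h1⟩

lemma totiso_bound {K V : Type*} [Field K] [AddCommGroup V] [Module K V]
    [FiniteDimensional K V] (B : LinearMap.BilinForm K V) (hB : B.Nondegenerate)
    (T : Submodule K V) (hT : ∀ x ∈ T, ∀ y ∈ T, B x y = 0) :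
    2 * finrank K T ≤ finrank K V := by
  set Φ : V →ₗ[K] Module.Dual K T := T.subtype.dualMap.comp B with hΦ
  have hsurj : Function.Surjective Φ := by
    intro f
    obtain ⟨F, hF⟩ := LinearMap.dualMap_surjective_of_injective T.injective_subtype f
    refine ⟨(B.toDual hB).symm F, ?_⟩
    ext t
    have : B ((B.toDual hB).symm F) (t : V) = F (t : V) :=
      LinearMap.BilinForm.apply_toDual_symm_apply F (t : V)
    simpa [Φ, this] using congrFun (congrArg (fun (h : Module.Dual K T) => ⇑h) hF) t
  have hker : T ≤ LinearMap.ker Φ := by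
    intro t ht
    rw [LinearMap.mem_ker]
    ext ⟨t', ht'⟩
    exact hT t ht t' ht'
  have h1 := LinearMap.finrank_range_add_finrank_ker Φ
  have h2 : finrank K (LinearMap.range Φ) = finrank K T := by
    rw [LinearMap.range_eq_top.mpr hsurj, finrank_top, Subspace.dual_finrank_eq]
  have h3 : finrank K T ≤ finrank K (LinearMap.ker Φ) := Submodule.finrank_mono hker
  omega

theorem stmt13 {V : Type*} [AddCommGroup V] [Module (ZMod 2) V]
    [FiniteDimensional (ZMod 2) V]
    (B : LinearMap.BilinForm (ZMod 2) V) (g : V → ZMod 2)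
    (hquad : ∀ x y, g (x + y) = g x + g y + B x y)
    (hnd : ∀ x : V, x ≠ 0 → ∃ y, B x y ≠ 0)
    (hdim : Module.finrank (ZMod 2) V ≠ 0)
    (hcase2 : ¬ (Module.finrank (ZMod 2) V = 2 ∧ ArfZero g))
    (hcase4 : ¬ (Module.finrank (ZMod 2) V = 4 ∧ ArfZero g))
    (k : ℕ) (w : Fin k → V) (hind : LinearIndependent (ZMod 2) w)
    (hgw : ∀ i, g (w i) = 1) (hBw : ∀ i j, B (w i) (w j) = 0)
    (a₁ a₂ : V)
    (ha₁perp : ∀ y ∈ Submodule.span (ZMod 2) (Set.range w), B a₁ y = 0)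
    (ha₂perp : ∀ y ∈ Submodule.span (ZMod 2) (Set.range w), B a₂ y = 0)
    (ha₁ : a₁ ∉ Submodule.span (ZMod 2) (Set.range w))
    (ha₂ : a₂ ∉ Submodule.span (ZMod 2) (Set.range w))
    (hga₁ : g a₁ = 1) (hga₂ : g a₂ = 1) (hBa : B a₁ a₂ = 0) :
    ∃ c : V, (∀ y ∈ Submodule.span (ZMod 2) (Set.range w), B c y = 0) ∧
      g c = 1 ∧ B a₁ c = 1 ∧ B a₂ c = 1 := by
  classical
  set W := Submodule.span (ZMod 2) (Set.range w) with hWdef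
  -- basic facts
  have hzero : g 0 = 0 := by
    have h := hquad 0 0
    simp only [add_zero, map_zero, LinearMap.zero_apply] at h
    have h2 := add_left_cancel (a := g 0) (show g 0 + 0 = g 0 + g 0 by rw [add_zero]; exact h)
    exact h2.symm
  have hVadd : ∀ x : V, x + x = 0 := by
    intro x
    have h2 : (1 : ZMod 2) + 1 = 0 := by decide
    calc x + x = (1 : ZMod 2) • x + (1 : ZMod 2) • x := by rw [one_smul]
      _ = ((1 : ZMod 2) + 1) • x := by rw [add_smul]
      _ = 0 := by rw [h2, zero_smul]
  have halt : ∀ x : V, B x x = 0 := by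
    intro x
    have h := hquad x x
    rw [hVadd, hzero, zmod2_add_self, zero_add] at h
    exact h.symm
  have hsym : ∀ x y : V, B x y = B y x := by
    intro x y
    have h1 := hquad x y
    have h2 := hquad y x
    rw [add_comm y x] at h2
    have h := h1.symm.trans h2
    linear_combination h
  have hndB : B.Nondegenerate := by
    refine ⟨fun x hx => ?_, fun x hx => ?_⟩
    · by_contra h0
      obtain ⟨y, hy⟩ := hnd x h0
      exact hy (hx y)
    · by_contra h0
      obtain ⟨y, hy⟩ := hnd x h0
      exact hy (by rw [hsym]; exact hx y)
  -- contradiction setup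
  by_contra hcon
  push_neg at hcon
  have H : ∀ c : V, (∀ y ∈ W, B c y = 0) → B a₁ c = 1 → B a₂ c = 1 → g c = 0 := by
    intro c h1 h2 h3
    rcases zmod2_cases (g c) with h | h
    · exact h
    · exact absurd h3 (hcon c h1 h h2)
  -- construct c₀
  have ha₁0 : Submodule.Quotient.mk (p := W) a₁ ≠ 0 := by
    intro h; exact ha₁ ((Submodule.Quotient.mk_eq_zero W).mp h)
  have ha₂0 : Submodule.Quotient.mk (p := W) a₂ ≠ 0 := by
    intro h; exact ha₂ ((Submodule.Quotient.mk_eq_zero W).mp h)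
  obtain ⟨φ, hφ1, hφ2⟩ := exists_dual_pair ha₁0 ha₂0
  set f : Module.Dual (ZMod 2) V := φ.comp W.mkQ with hfdef
  have hfW : ∀ y ∈ W, f y = 0 := by
    intro y hy
    simp only [hfdef, LinearMap.comp_apply, W.mkQ_apply]
    rw [(Submodule.Quotient.mk_eq_zero W).mpr hy, map_zero]
  have hfa₁ : f a₁ = 1 := hφ1
  have hfa₂ : f a₂ = 1 := hφ2
  set c₀ : V := (B.toDual hndB).symm f with hc₀def
  have hc₀ : ∀ v : V, B c₀ v = f v := fun v =>
    LinearMap.BilinForm.apply_toDual_symm_apply f v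
  have hc₀U : ∀ y ∈ W, B c₀ y = 0 := fun y hy => by rw [hc₀]; exact hfW y hy
  have hB1c₀ : B a₁ c₀ = 1 := by rw [hsym, hc₀]; exact hfa₁
  have hB2c₀ : B a₂ c₀ = 1 := by rw [hsym, hc₀]; exact hfa₂
  have hgc₀ : g c₀ = 0 := H c₀ hc₀U hB1c₀ hB2c₀
  -- key lemma
  have hkey : ∀ t : V, (∀ y ∈ W, B t y = 0) → B a₁ t = 0 → B a₂ t = 0 →
      g t = B c₀ t := by
    intro t htU h1 h2
    have hc : g (c₀ + t) = 0 := by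
      apply H
      · intro y hy
        rw [map_add, LinearMap.add_apply, hc₀U y hy, htU y hy, add_zero]
      · rw [map_add, hB1c₀, h1, add_zero]
      · rw [map_add, hB2c₀, h2, add_zero]
    rw [hquad, hgc₀, zero_add] at hc
    exact zmod2_add_eq_zero hc
  rcases Nat.eq_zero_or_pos k with hk | hk
  · -- k = 0 case
    subst hk
    have hWbot : W = ⊥ := by
      rw [hWdef, Set.range_eq_empty, Submodule.span_empty]
    have htrivU : ∀ t : V, ∀ y ∈ W, B t y = 0 := by
      intro t y hy
      rw [hWbot, Submodule.mem_bot] at hy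
      rw [hy, map_zero]
    have ha₁ne : a₁ ≠ 0 := by
      intro h; exact ha₁ (by rw [h]; exact W.zero_mem)
    have ha₂ne : a₂ ≠ 0 := by
      intro h; exact ha₂ (by rw [h]; exact W.zero_mem)
    set T : Submodule (ZMod 2) V := LinearMap.ker (B a₁) ⊓ LinearMap.ker (B a₂)
      with hTdef
    have hmemT : ∀ x : V, x ∈ T ↔ B a₁ x = 0 ∧ B a₂ x = 0 := by
      intro x
      simp [hTdef, Submodule.mem_inf, LinearMap.mem_ker]
    have hgT : ∀ x ∈ T, g x = B c₀ x := by
      intro x hx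
      obtain ⟨h1, h2⟩ := (hmemT x).mp hx
      exact hkey x (htrivU x) h1 h2
    have hTiso : ∀ x ∈ T, ∀ y ∈ T, B x y = 0 := by
      intro x hx y hy
      have e1 := hgT x hx
      have e2 := hgT y hy
      have e3 := hgT (x + y) (T.add_mem hx hy)
      have h := hquad x y
      rw [e1, e2, e3, map_add] at h
      exact left_eq_add.mp h
    have hbd : 2 * finrank (ZMod 2) T ≤ finrank (ZMod 2) V :=
      totiso_bound B hndB T hTiso
    have ha₁T : a₁ ∈ T := (hmemT a₁).mpr ⟨halt a₁, by rw [hsym]; exact hBa⟩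
    have ha₂T : a₂ ∈ T := (hmemT a₂).mpr ⟨hBa, halt a₂⟩
    by_cases heq : a₂ = a₁
    · -- dim 2 case
      subst heq
      have hTk : T = LinearMap.ker (B a₂) := by rw [hTdef, inf_idem]
      have hrn := LinearMap.finrank_range_add_finrank_ker (B a₂)
      have hr1 : finrank (ZMod 2) (LinearMap.range (B a₂)) ≤ 1 := by
        have := Submodule.finrank_le (LinearMap.range (B a₂))
        rwa [Module.finrank_self] at this
      have hTfr : finrank (ZMod 2) T = finrank (ZMod 2) (LinearMap.ker (B a₂)) := by
        rw [hTk]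
      have hT1 : 1 ≤ finrank (ZMod 2) T := by
        have hle : Submodule.span (ZMod 2) {a₂} ≤ T :=
          (Submodule.span_singleton_le_iff_mem _ _).mpr ha₂T
        have := Submodule.finrank_mono hle
        rwa [finrank_span_singleton ha₂ne] at this
      have n2 : finrank (ZMod 2) V = 2 := by omega
      have li : LinearIndependent (ZMod 2) ![a₂, c₀] := by
        rw [Fintype.linearIndependent_iff]
        intro co hco
        rw [Fin.sum_univ_two] at hco
        simp only [Matrix.cons_val_zero, Matrix.cons_val_one, Matrix.head_cons] at hco
        have h1 := congrArg (B a₂) hco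
        rw [map_add, map_smul, map_smul, map_zero, halt, hB2c₀] at h1
        simp only [smul_eq_mul, mul_zero, mul_one, zero_add] at h1
        have h0 : co 0 • a₂ = 0 := by rw [h1, zero_smul, add_zero] at hco; exact hco
        have h0' : co 0 = 0 := by
          rcases smul_eq_zero.mp h0 with h | h
          · exact h
          · exact absurd h ha₂ne
        intro i; fin_cases i
        · exact h0'
        · exact h1
      have hcards : Fintype.card (Fin 2) = finrank (ZMod 2) V := by
        rw [Fintype.card_fin, n2]
      let b := basisOfLinearIndependentOfCardEqFinrank li hcards
      have hb : ⇑b = ![a₂, c₀] := coe_basisOfLinearIndependentOfCardEqFinrank li hcards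
      have hform : ∀ x : Fin 2 → ZMod 2,
          g (b.equivFun.symm x) = x 0 + x 0 * x 1 := by
        intro x
        rw [Basis.equivFun_symm_apply, Fin.sum_univ_two, hb]
        simp only [Matrix.cons_val_zero, Matrix.cons_val_one, Matrix.head_cons]
        rcases zmod2_cases (x 0) with h0 | h0 <;> rcases zmod2_cases (x 1) with h1 | h1 <;>
            rw [h0, h1] <;>
          simp [hquad, hzero, hga₂, hgc₀, hB2c₀] <;> decide
      have hcard : ∀ p : ZMod 2, Nat.card {v : V // g v = p} =
          Nat.card {x : Fin 2 → ZMod 2 // x 0 + x 0 * x 1 = p} := by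
        intro p
        apply Nat.card_congr
        refine Equiv.subtypeEquiv b.equivFun.toEquiv (fun v => ?_)
        rw [show (b.equivFun.toEquiv v : Fin 2 → ZMod 2) = b.equivFun v from rfl,
          ← hform (b.equivFun v), LinearEquiv.symm_apply_apply]
      refine hcase2 ⟨n2, ?_⟩
      show Nat.card {v : V // g v = 1} < Nat.card {v : V // g v = 0}
      rw [hcard 1, hcard 0, Nat.card_eq_fintype_card, Nat.card_eq_fintype_card]
      decide
    · -- dim 4 case
      have hsum_ne : a₁ + a₂ ≠ 0 := by
        intro h
        exact heq (add_left_cancel (h.trans (hVadd a₁).symm))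
      -- dimension count : finrank V = 4
      have li2 : LinearIndependent (ZMod 2) ![a₁, a₂] := by
        rw [Fintype.linearIndependent_iff]
        intro co hco
        rw [Fin.sum_univ_two] at hco
        simp only [Matrix.cons_val_zero, Matrix.cons_val_one, Matrix.head_cons] at hco
        have hco' : ∀ i, co i = 0 := by
          rcases zmod2_cases (co 0) with h0 | h0 <;>
            rcases zmod2_cases (co 1) with h1 | h1 <;>
            rw [h0, h1] at hco <;>
            simp only [zero_smul, one_smul, add_zero, zero_add] at hco
          · intro i; fin_cases i <;> assumption
          · exact absurd hco ha₂ne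
          · exact absurd hco ha₁ne
          · exact absurd hco hsum_ne
        exact hco'
      have h2T : 2 ≤ finrank (ZMod 2) T := by
        have hsp : Submodule.span (ZMod 2) (Set.range ![a₁, a₂]) ≤ T := by
          rw [Submodule.span_le]
          rintro _ ⟨i, rfl⟩
          fin_cases i
          · exact ha₁T
          · exact ha₂T
        have hmono := Submodule.finrank_mono hsp
        rwa [finrank_span_eq_card li2, Fintype.card_fin] at hmono
      have hkerΨ : LinearMap.ker (LinearMap.prod (B a₁) (B a₂)) = T :=
        LinearMap.ker_prod _ _
      have hrn := LinearMap.finrank_range_add_finrank_ker (LinearMap.prod (B a₁) (B a₂))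
      have hr2 : finrank (ZMod 2) (LinearMap.range (LinearMap.prod (B a₁) (B a₂))) ≤ 2 := by
        have h1 := Submodule.finrank_le (LinearMap.range (LinearMap.prod (B a₁) (B a₂)))
        have h2 : finrank (ZMod 2) (ZMod 2 × ZMod 2) = 2 := by
          rw [Module.finrank_prod, Module.finrank_self]
        omega
      rw [hkerΨ] at hrn
      have n4 : finrank (ZMod 2) V = 4 := by omega
      -- construct c₁
      have hns : a₁ ∉ Submodule.span (ZMod 2) {a₂} := by
        intro h
        rw [Submodule.mem_span_singleton] at h
        obtain ⟨t, ht⟩ := h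
        rcases zmod2_cases t with h' | h' <;> rw [h'] at ht
        · rw [zero_smul] at ht; exact ha₁ne ht.symm
        · rw [one_smul] at ht; exact heq ht
      have hq1 : Submodule.Quotient.mk (p := Submodule.span (ZMod 2) {a₂}) a₁ ≠ 0 := by
        intro h
        exact hns ((Submodule.Quotient.mk_eq_zero _).mp h)
      obtain ⟨φ₁, hφ₁, -⟩ := exists_dual_pair hq1 hq1
      set f₁ : Module.Dual (ZMod 2) V := φ₁.comp (Submodule.span (ZMod 2) {a₂}).mkQ
        with hf₁def
      have hf₁a₁ : f₁ a₁ = 1 := hφ₁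
      have hf₁a₂ : f₁ a₂ = 0 := by
        simp only [hf₁def, LinearMap.comp_apply, Submodule.mkQ_apply]
        rw [(Submodule.Quotient.mk_eq_zero _).mpr (Submodule.mem_span_singleton_self a₂),
          map_zero]
      set c' : V := (B.toDual hndB).symm f₁ with hc'def
      have hc' : ∀ v : V, B c' v = f₁ v := fun v =>
        LinearMap.BilinForm.apply_toDual_symm_apply f₁ v
      have h1c' : B a₁ c' = 1 := by rw [hsym, hc']; exact hf₁a₁
      have h2c' : B a₂ c' = 0 := by rw [hsym, hc']; exact hf₁a₂
      have hs21 : B a₂ a₁ = 0 := by rw [hsym]; exact hBa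
      have hs31 : B c₀ a₁ = 1 := by rw [hsym]; exact hB1c₀
      have hs32 : B c₀ a₂ = 1 := by rw [hsym]; exact hB2c₀
      obtain ⟨c₁, hB14, hB24, hB34, hgc₁⟩ : ∃ c₁ : V,
          B a₁ c₁ = 1 ∧ B a₂ c₁ = 0 ∧ B c₀ c₁ = 0 ∧ g c₁ = 1 := by
        set β : ZMod 2 := B c₀ c' with hβ
        set c'' : V := c' + β • a₁ with hc''def
        have h1c'' : B a₁ c'' = 1 := by
          rw [hc''def, map_add, map_smul, halt, smul_eq_mul, mul_zero, add_zero, h1c']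
        have h2c'' : B a₂ c'' = 0 := by
          rw [hc''def, map_add, map_smul, hs21, smul_eq_mul, mul_zero, add_zero, h2c']
        have h3c'' : B c₀ c'' = 0 := by
          rw [hc''def, map_add, map_smul, hs31, smul_eq_mul, mul_one, ← hβ,
            zmod2_add_self]
        have hs1c'' : B c'' a₁ = 1 := by rw [hsym]; exact h1c''
        have hs2c'' : B c'' a₂ = 0 := by rw [hsym]; exact h2c''
        have hgd : g (a₁ + a₂) = 0 := by
          rw [hquad, hga₁, hga₂, hBa]; decide
        rcases zmod2_cases (g c'') with hγ | hγ
        · refine ⟨c'' + (a₁ + a₂), ?_, ?_, ?_, ?_⟩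
          · rw [map_add, h1c'', map_add, halt, hBa, add_zero, add_zero]
          · rw [map_add, h2c'', map_add, hs21, halt, add_zero, add_zero]
          · rw [map_add, h3c'', map_add, hs31, hs32, zero_add]; decide
          · rw [hquad, hγ, hgd, map_add, hs1c'', hs2c'', zero_add, zero_add, add_zero]
        · exact ⟨c'', h1c'', h2c'', h3c'', hγ⟩
      have hs41 : B c₁ a₁ = 1 := by rw [hsym]; exact hB14
      have hs42 : B c₁ a₂ = 0 := by rw [hsym]; exact hB24
      have hs43 : B c₁ c₀ = 0 := by rw [hsym]; exact hB34
      -- basis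
      have li4 : LinearIndependent (ZMod 2) ![a₁, a₂, c₀, c₁] := by
        rw [Fintype.linearIndependent_iff]
        intro co hco
        rw [Fin.sum_univ_four] at hco
        simp only [Matrix.cons_val_zero, Matrix.cons_val_one, Matrix.head_cons,
          Matrix.cons_val_two, Matrix.tail_cons, Matrix.cons_val_three] at hco
        have e2 := congrArg (B a₂) hco
        simp only [map_add, map_smul, map_zero, smul_eq_mul, hs21, halt, hB2c₀, hB24,
          mul_zero, mul_one, zero_add, add_zero] at e2
        have e1 := congrArg (B a₁) hco
        simp only [map_add, map_smul, map_zero, smul_eq_mul, halt, hBa, hB1c₀, hB14,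
          mul_zero, mul_one, zero_add, add_zero, e2, zero_mul] at e1
        have e4 := congrArg (B c₁) hco
        simp only [map_add, map_smul, map_zero, smul_eq_mul, hs41, hs42, hs43, halt,
          mul_zero, mul_one, zero_add, add_zero, e1, e2, zero_mul] at e4
        have e3 := congrArg (B c₀) hco
        simp only [map_add, map_smul, map_zero, smul_eq_mul, hs31, hs32, hB34, halt,
          mul_zero, mul_one, zero_add, add_zero, e1, e2, e4, zero_mul] at e3
        intro i; fin_cases i
        · exact e4
        · exact e3
        · exact e2
        · exact e1
      have hcards : Fintype.card (Fin 4) = finrank (ZMod 2) V := by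
        rw [Fintype.card_fin, n4]
      let b := basisOfLinearIndependentOfCardEqFinrank li4 hcards
      have hb : ⇑b = ![a₁, a₂, c₀, c₁] := coe_basisOfLinearIndependentOfCardEqFinrank li4 hcards
      have hform : ∀ x : Fin 4 → ZMod 2,
          g (b.equivFun.symm x) =
            x 0 + x 1 + x 3 + x 0 * x 2 + x 0 * x 3 + x 1 * x 2 := by
        intro x
        rw [Basis.equivFun_symm_apply, Fin.sum_univ_four, hb]
        simp only [Matrix.cons_val_zero, Matrix.cons_val_one, Matrix.head_cons,
          Matrix.cons_val_two, Matrix.tail_cons, Matrix.cons_val_three]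
        rcases zmod2_cases (x 0) with h0 | h0 <;> rcases zmod2_cases (x 1) with h1 | h1 <;>
            rcases zmod2_cases (x 2) with h2 | h2 <;>
            rcases zmod2_cases (x 3) with h3 | h3 <;>
            rw [h0, h1, h2, h3] <;>
          simp [hquad, hzero, hga₁, hga₂, hgc₀, hgc₁, hBa, hB1c₀, hB2c₀, hB14, hB24,
            hB34, map_add, LinearMap.add_apply] <;> decide
      have hcard : ∀ p : ZMod 2, Nat.card {v : V // g v = p} =
          Nat.card {x : Fin 4 → ZMod 2 //
            x 0 + x 1 + x 3 + x 0 * x 2 + x 0 * x 3 + x 1 * x 2 = p} := by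
        intro p
        apply Nat.card_congr
        refine Equiv.subtypeEquiv b.equivFun.toEquiv (fun v => ?_)
        rw [show (b.equivFun.toEquiv v : Fin 4 → ZMod 2) = b.equivFun v from rfl,
          ← hform (b.equivFun v), LinearEquiv.symm_apply_apply]
      refine hcase4 ⟨n4, ?_⟩
      show Nat.card {v : V // g v = 1} < Nat.card {v : V // g v = 0}
      rw [hcard 1, hcard 0, Nat.card_eq_fintype_card, Nat.card_eq_fintype_card]
      decide
  · -- k ≥ 1 case
    set i : Fin k := ⟨0, hk⟩
    have hwU : ∀ y ∈ W, B (w i) y = 0 := by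
      intro y hy
      have hle : W ≤ LinearMap.ker (B (w i)) := by
        rw [hWdef, Submodule.span_le]
        rintro _ ⟨j, rfl⟩
        exact hBw i j
      exact hle hy
    have hwW : w i ∈ W := Submodule.subset_span ⟨i, rfl⟩
    have h1 : B a₁ (w i) = 0 := ha₁perp _ hwW
    have h2 : B a₂ (w i) = 0 := ha₂perp _ hwW
    have := hkey (w i) hwU h1 h2
    rw [hgw i, hc₀U _ hwW] at this
    exact one_ne_zero this
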